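/- arXiv:2408.12718 — 7 statements merged into one kernel-verified Lean document; each statement's English description precedes it below -/
import Mathlib

section
/- Let X be a rack and x ∈ X such that the left multiplication L_x has finite order n as a permutation of X. Then g_x^n lies in the center of the enveloping group As(X). -/
open Quandles

theorem ShelfHom.map_act'_pow_apply {R : Type*} [Rack R] {G : Type*} [Group G]
    (f : R →◃ Quandle.Conj G) (x y : R) (k : ℕ) :
    (f ((Rack.act' x ^ k) y) : G) = (f x : G) ^ k * f y * ((f x : G) ^ k)⁻¹ := by
  induction k with
  | zero => simp
  | succ k ih =>
    rw [pow_succ', Equiv.Perm.mul_apply, Rack.act'_apply, f.map_act, Quandle.conj_act_eq_conj,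
      ih]
    group

namespace Rack.EnvelGroup

theorem hom_ext {R : Type*} [Rack R] {G : Type*} [Group G] {φ ψ : EnvelGroup R →* G}
    (h : ∀ x, φ (toEnvelGroup R x) = ψ (toEnvelGroup R x)) : φ = ψ :=
  toEnvelGroup.map.symm.injective (ShelfHom.ext (funext h))

/-- Conjugation by `z` is an endomorphism of `As(R)`; fixing the generators forces it to be the
identity. -/
theorem mem_center_of_conj_toEnvelGroup {R : Type*} [Rack R] {z : EnvelGroup R}
    (h : ∀ y, z * toEnvelGroup R y * z⁻¹ = toEnvelGroup R y) :
    z ∈ Subgroup.center (EnvelGroup R) := by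
  have hconj : (MulAut.conj z).toMonoidHom = MonoidHom.id _ := hom_ext h
  rw [Subgroup.mem_center_iff]
  intro g
  exact (mul_inv_eq_iff_eq_mul.mp (DFunLike.congr_fun hconj g)).symm

end Rack.EnvelGroup

theorem envelGroup_pow_mem_center_general (X : Type*) [Rack X] (x : X) (n : ℕ)
    (hord : orderOf (Rack.act' x : Equiv.Perm X) = n) :
    (Rack.toEnvelGroup X x : Rack.EnvelGroup X) ^ n ∈ Subgroup.center (Rack.EnvelGroup X) := by
  refine Rack.EnvelGroup.mem_center_of_conj_toEnvelGroup fun y => ?_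
  rw [← ShelfHom.map_act'_pow_apply, ← hord, pow_orderOf_eq_one, Equiv.Perm.one_apply]

/-- If the left multiplication `L_x` of a rack `X` has finite order `n`
(as a permutation of `X`), then `g_x ^ n` is central in the enveloping group `As(X)`. -/
theorem envelGroup_pow_mem_center (X : Type*) [Rack X] (x : X) (n : ℕ) (hn : 0 < n)
    (hord : orderOf (Rack.act' x : Equiv.Perm X) = n) :
    (Rack.toEnvelGroup X x : Rack.EnvelGroup X) ^ n ∈ Subgroup.center (Rack.EnvelGroup X) :=
  envelGroup_pow_mem_center_general X x n hord
end

section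
/- Let X be a finite connected rack. Then all the permutations L_x (x ∈ X) have the same order. Furthermore, if n is that common order, then in the enveloping group As(X) one has g_x^n = g_y^n for all x, y ∈ X. -/
open Quandles

private lemma env_conj {X : Type*} [Rack X] (z w : X) :
    (Rack.toEnvelGroup X (z ◃ w) : Rack.EnvelGroup X)
      = Rack.toEnvelGroup X z * Rack.toEnvelGroup X w * (Rack.toEnvelGroup X z)⁻¹ :=
  (Rack.toEnvelGroup X).map_act'

private lemma env_pow_conj {X : Type*} [Rack X] (z w : X) (k : ℕ) :
    (Rack.toEnvelGroup X z : Rack.EnvelGroup X) ^ k * Rack.toEnvelGroup X w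
        * ((Rack.toEnvelGroup X z : Rack.EnvelGroup X) ^ k)⁻¹
      = Rack.toEnvelGroup X (((Rack.act' z : Equiv.Perm X) ^ k) w) := by
  induction k with
  | zero => simp
  | succ k ih =>
    have : ((Rack.act' z : Equiv.Perm X) ^ (k + 1)) w
        = z ◃ (((Rack.act' z : Equiv.Perm X) ^ k) w) := by
      rw [pow_succ']
      simp [Equiv.Perm.mul_apply, Rack.act'_apply]
    rw [this, env_conj, ← ih]
    group

/-- `g_z ^ (orderOf act' z)` commutes with every generator. -/
private lemma env_pow_comm {X : Type*} [Rack X] (z w : X) :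
    (Rack.toEnvelGroup X z : Rack.EnvelGroup X) ^ orderOf (Rack.act' z : Equiv.Perm X)
        * Rack.toEnvelGroup X w
      = Rack.toEnvelGroup X w
        * (Rack.toEnvelGroup X z : Rack.EnvelGroup X) ^ orderOf (Rack.act' z : Equiv.Perm X) := by
  have h := env_pow_conj z w (orderOf (Rack.act' z : Equiv.Perm X))
  rw [pow_orderOf_eq_one] at h
  simp only [Equiv.Perm.one_apply] at h
  rw [mul_inv_eq_iff_eq_mul] at h
  exact h

private lemma act'_of_closure {X : Type*} [Rack X] (φ : Equiv.Perm X)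
    (hφ : φ ∈ Subgroup.closure (Set.range (fun x : X => (Rack.act' x : Equiv.Perm X)))) :
    ∀ w : X, (Rack.act' (φ w) : Equiv.Perm X) = φ * Rack.act' w * φ⁻¹ := by
  induction hφ using Subgroup.closure_induction with
  | mem ψ hψ =>
    obtain ⟨z, rfl⟩ := hψ
    intro w
    have := Rack.ad_conj z w
    simpa [Rack.act'_apply] using this
  | one => intro w; simp
  | mul φ ψ hφ hψ ihφ ihψ =>
    intro w
    have : (φ * ψ) w = φ (ψ w) := rfl
    rw [this, ihφ, ihψ]
    group
  | inv φ hφ ihφ =>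
    intro w
    have := ihφ (φ⁻¹ w)
    rw [show φ (φ⁻¹ w) = w from Equiv.apply_symm_apply φ w] at this
    rw [this]; group

/-- In a finite connected rack `X`, all left multiplications `L_x` have the
same order, and if `n` is that common order then `g_x ^ n = g_y ^ n` in the enveloping
group `As(X)` for all `x, y : X`. -/
theorem connected_rack_same_order_and_pow_eq (X : Type*) [Rack X] [Fintype X]
    (hconn : ∀ x y : X, ∃ φ ∈ Subgroup.closure
      (Set.range (fun x : X => (Rack.act' x : Equiv.Perm X))), φ x = y)
    (x y : X) :
    orderOf (Rack.act' x : Equiv.Perm X) = orderOf (Rack.act' y : Equiv.Perm X) ∧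
    (Rack.toEnvelGroup X x : Rack.EnvelGroup X) ^ orderOf (Rack.act' x : Equiv.Perm X)
      = (Rack.toEnvelGroup X y : Rack.EnvelGroup X)
          ^ orderOf (Rack.act' x : Equiv.Perm X) := by
  -- all orders are equal
  have horder : ∀ a b : X,
      orderOf (Rack.act' a : Equiv.Perm X) = orderOf (Rack.act' b : Equiv.Perm X) := by
    intro a b
    obtain ⟨φ, hφ, hab⟩ := hconn a b
    have h := act'_of_closure φ hφ a
    rw [hab] at h
    rw [h]
    have h2 : orderOf ((MulAut.conj φ) (Rack.act' a : Equiv.Perm X))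
        = orderOf (Rack.act' a : Equiv.Perm X) := (MulAut.conj φ).orderOf_eq _
    simpa [MulAut.conj_apply] using h2.symm
  refine ⟨horder x y, ?_⟩
  set N := orderOf (Rack.act' x : Equiv.Perm X) with hN
  -- g_w ^ N commutes with every generator
  have hcomm : ∀ w z : X,
      (Rack.toEnvelGroup X w : Rack.EnvelGroup X) ^ N * Rack.toEnvelGroup X z
        = Rack.toEnvelGroup X z * (Rack.toEnvelGroup X w : Rack.EnvelGroup X) ^ N := by
    intro w z
    rw [hN, horder x w]
    exact env_pow_comm w z
  obtain ⟨φ, hφ, hxy⟩ := hconn x y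
  have key : ∀ w : X, (Rack.toEnvelGroup X (φ w) : Rack.EnvelGroup X) ^ N
      = (Rack.toEnvelGroup X w : Rack.EnvelGroup X) ^ N := by
    clear hxy
    induction hφ using Subgroup.closure_induction with
    | mem ψ hψ =>
      obtain ⟨z, rfl⟩ := hψ
      intro w
      have h1 : (Rack.act' z : Equiv.Perm X) w = z ◃ w := Rack.act'_apply z w
      rw [h1, env_conj, conj_pow, ← hcomm w z]
      group
    | one => intro w; simp
    | mul φ ψ hφ hψ ihφ ihψ =>
      intro w
      have : (φ * ψ) w = φ (ψ w) := rfl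
      rw [this, ihφ, ihψ]
    | inv φ hφ ihφ =>
      intro w
      have := ihφ (φ⁻¹ w)
      rwa [show φ (φ⁻¹ w) = w from Equiv.apply_symm_apply φ w, eq_comm] at this
  have := key x
  rw [hxy] at this
  exact this.symm
end

section
/- Let X be a finite connected rack, let x₀ ∈ X, and let n be the order of the permutation L_{x₀}. Then the quotient group G̅_X = As(X)/N, where N is the normal closure of {g_{x₀}^n} in As(X), is a finite group. -/
open Quandles
open scoped commutatorElement

section AuxRack

open Rack

theorem Aux.mem_closure_range (X : Type*) [Rack X] (a : EnvelGroup X) :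
    a ∈ Subgroup.closure (Set.range (fun x : X => (toEnvelGroup X x : EnvelGroup X))) := by
  induction a using Quotient.inductionOn with
  | h w =>
    induction w with
    | unit => exact Subgroup.one_mem _
    | incl x => exact Subgroup.subset_closure ⟨x, rfl⟩
    | mul a b ha hb => exact Subgroup.mul_mem _ ha hb
    | inv a ha => exact Subgroup.inv_mem _ ha

/-- If a subgroup of `G` contains the image of every generator of `EnvelGroup X`
under a homomorphism, it contains the image of everything. -/
theorem Aux.mem_of_gen {X : Type*} [Rack X] {G : Type*} [Group G]
    (f : EnvelGroup X →* G) (H : Subgroup G)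
    (h : ∀ x : X, f (toEnvelGroup X x) ∈ H) (w : EnvelGroup X) : f w ∈ H := by
  refine Subgroup.closure_induction (p := fun w _ => f w ∈ H)
    ?_ ?_ ?_ ?_ (Aux.mem_closure_range X w)
  · rintro g ⟨x, rfl⟩; exact h x
  · simpa using H.one_mem
  · intro a b _ _ ha hb; rw [map_mul]; exact H.mul_mem ha hb
  · intro a _ ha; rw [map_inv]; exact H.inv_mem ha

theorem Aux.envelAction_toEnvelGroup {X : Type*} [Rack X] (x : X) :
    envelAction (toEnvelGroup X x : EnvelGroup X) = act' x := by
  ext y; exact envelAction_prop x y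

/-- Conjugation in the enveloping group acts on generators through `envelAction`. -/
theorem Aux.conj_gen {X : Type*} [Rack X] (w : EnvelGroup X) (y : X) :
    w * toEnvelGroup X y * w⁻¹ = toEnvelGroup X (envelAction w y) := by
  refine Subgroup.closure_induction
    (p := fun w _ => ∀ y : X, w * toEnvelGroup X y * w⁻¹ = toEnvelGroup X (envelAction w y))
    ?_ ?_ ?_ ?_ (Aux.mem_closure_range X w) y
  · intro g hg y
    obtain ⟨x, rfl⟩ := hg
    have h1 : (toEnvelGroup X (x ◃ y) : EnvelGroup X)
        = toEnvelGroup X x * toEnvelGroup X y * (toEnvelGroup X x)⁻¹ := by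
      rw [ShelfHom.map_act, Quandle.conj_act_eq_conj]
    rw [Aux.envelAction_toEnvelGroup, act'_apply, ← h1]
  · intro y; simp
  · intro g₁ g₂ _ _ h1 h2 y
    rw [map_mul]
    simp only [Equiv.Perm.mul_apply]
    rw [← h1, ← h2]; group
  · intro g _ h y
    have h2 := h (envelAction g⁻¹ y)
    have h3 : envelAction g (envelAction g⁻¹ y) = y := by
      rw [← Equiv.Perm.mul_apply, ← map_mul, mul_inv_cancel, map_one, Equiv.Perm.one_apply]
    rw [h3] at h2
    rw [← h2]; group

/-- Multiplying by central elements does not change a commutator. -/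
theorem Aux.commutator_mul_left_central {G : Type*} [Group G] (a b u : G)
    (hu : u ∈ Subgroup.center G) : ⁅a * u, b⁆ = ⁅a, b⁆ := by
  have hu' : ∀ g : G, g * u = u * g := Subgroup.mem_center_iff.mp hu
  have key : u * b * u⁻¹ = b := by
    rw [mul_inv_eq_iff_eq_mul]; exact (hu' b).symm
  rw [commutatorElement_def, commutatorElement_def, mul_inv_rev]
  calc a * u * b * (u⁻¹ * a⁻¹) * b⁻¹ = a * (u * b * u⁻¹) * a⁻¹ * b⁻¹ := by group
  _ = a * b * a⁻¹ * b⁻¹ := by rw [key]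

theorem Aux.commutator_mul_right_central {G : Type*} [Group G] (a b v : G)
    (hv : v ∈ Subgroup.center G) : ⁅a, b * v⁆ = ⁅a, b⁆ := by
  have hv' : ∀ g : G, g * v = v * g := Subgroup.mem_center_iff.mp hv
  have key : v * a⁻¹ * v⁻¹ = a⁻¹ := by
    rw [mul_inv_eq_iff_eq_mul]; exact (hv' a⁻¹).symm
  rw [commutatorElement_def, commutatorElement_def, mul_inv_rev]
  calc a * (b * v) * a⁻¹ * (v⁻¹ * b⁻¹) = a * b * (v * a⁻¹ * v⁻¹) * b⁻¹ := by group
  _ = a * b * a⁻¹ * b⁻¹ := by rw [key]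

/-- Multiplying by central elements does not change a commutator. -/
theorem Aux.commutator_mul_central {G : Type*} [Group G] (a b u v : G)
    (hu : u ∈ Subgroup.center G) (hv : v ∈ Subgroup.center G) :
    ⁅a * u, b * v⁆ = ⁅a, b⁆ := by
  rw [Aux.commutator_mul_left_central _ _ _ hu, Aux.commutator_mul_right_central _ _ _ hv]

end AuxRack

/-- Let `X` be a finite connected rack, `x₀ ∈ X`, and `n` the order of the
permutation `L_{x₀}`. Then the finite enveloping group `G̅_X = As(X)/N`, where `N` is the
normal closure of `{g_{x₀} ^ n}`, is a finite group. -/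
theorem finite_envelGroup_quotient_finite (X : Type*) [Rack X] [Fintype X]
    (hconn : ∀ x y : X, ∃ φ ∈ Subgroup.closure
      (Set.range (fun x : X => (Rack.act' x : Equiv.Perm X))), φ x = y)
    (x₀ : X) :
    Finite (Rack.EnvelGroup X ⧸ Subgroup.normalClosure
      {(Rack.toEnvelGroup X x₀ : Rack.EnvelGroup X)
        ^ orderOf (Rack.act' x₀ : Equiv.Perm X)}) := by
  classical
  set n := orderOf (Rack.act' x₀ : Equiv.Perm X) with hn
  set N := Subgroup.normalClosure
      {(Rack.toEnvelGroup X x₀ : Rack.EnvelGroup X) ^ n} with hN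
  haveI : N.Normal := Subgroup.normalClosure_normal
  set Q := Rack.EnvelGroup X ⧸ N with hQ
  let π : Rack.EnvelGroup X →* Q := QuotientGroup.mk' N
  have hπsurj : Function.Surjective π := QuotientGroup.mk'_surjective N
  -- `N` is contained in the kernel of the action on `X`
  have hNker : N ≤ MonoidHom.ker (Rack.envelAction (R := X)) := by
    apply Subgroup.normalClosure_le_normal
    rw [Set.singleton_subset_iff]
    have : Rack.envelAction ((Rack.toEnvelGroup X x₀ : Rack.EnvelGroup X) ^ n)
        = (Rack.act' x₀ : Equiv.Perm X) ^ n := by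
      rw [map_pow, Aux.envelAction_toEnvelGroup]
    rw [SetLike.mem_coe, MonoidHom.mem_ker, this, hn, pow_orderOf_eq_one]
  -- the induced action of `Q` on `X`
  let ρ : Q →* (X ≃ X) := QuotientGroup.lift N Rack.envelAction hNker
  have hρπ : ∀ w, ρ (π w) = Rack.envelAction w := fun w => rfl
  -- the kernel of `ρ` is central in `Q`
  have hker : ρ.ker ≤ Subgroup.center Q := by
    intro q hq
    obtain ⟨w, rfl⟩ := hπsurj q
    rw [MonoidHom.mem_ker, hρπ] at hq
    rw [Subgroup.mem_center_iff]
    intro a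
    have hc : ∀ x : X, π (Rack.toEnvelGroup X x) ∈ Subgroup.centralizer {π w} := by
      intro x
      rw [Subgroup.mem_centralizer_singleton_iff]
      have := Aux.conj_gen w x
      rw [hq] at this
      simp only [Equiv.Perm.one_apply] at this
      have h2 : π w * π (Rack.toEnvelGroup X x) * (π w)⁻¹ = π (Rack.toEnvelGroup X x) := by
        rw [← map_mul, ← map_inv, ← map_mul, this]
      rw [mul_inv_eq_iff_eq_mul] at h2
      exact h2.symm
    have := Aux.mem_of_gen π _ hc
    obtain ⟨b, rfl⟩ := hπsurj a
    have hb := this b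
    rw [Subgroup.mem_centralizer_singleton_iff] at hb
    exact hb
  -- `Q ⧸ center Q` is finite
  haveI hfq : Finite (Q ⧸ ρ.ker) :=
    Finite.of_injective _ (QuotientGroup.kerLift_injective ρ)
  haveI hfcenter : Finite (Q ⧸ Subgroup.center Q) := by
    have hsurj : Function.Surjective
        (QuotientGroup.map ρ.ker (Subgroup.center Q) (MonoidHom.id Q) hker) := by
      intro b
      obtain ⟨q, rfl⟩ := QuotientGroup.mk_surjective b
      exact ⟨QuotientGroup.mk q, rfl⟩
    exact Finite.of_surjective _ hsurj
  -- the commutator subgroup of `Q` is finite (Schur)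
  haveI hfcs : Finite (commutatorSet Q) := by
    apply Set.Finite.subset (Set.finite_range
      (fun p : (Q ⧸ Subgroup.center Q) × (Q ⧸ Subgroup.center Q) =>
        ⁅Quotient.out p.1, Quotient.out p.2⁆))
    rintro - ⟨a, b, rfl⟩
    refine ⟨(QuotientGroup.mk a, QuotientGroup.mk b), ?_⟩
    have ha : (QuotientGroup.mk (Quotient.out (QuotientGroup.mk a
        : Q ⧸ Subgroup.center Q)) : Q ⧸ Subgroup.center Q) = QuotientGroup.mk a :=
      Quotient.out_eq _
    have hb : (QuotientGroup.mk (Quotient.out (QuotientGroup.mk b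
        : Q ⧸ Subgroup.center Q)) : Q ⧸ Subgroup.center Q) = QuotientGroup.mk b :=
      Quotient.out_eq _
    rw [QuotientGroup.eq] at ha hb
    set a' := Quotient.out (QuotientGroup.mk a : Q ⧸ Subgroup.center Q)
    set b' := Quotient.out (QuotientGroup.mk b : Q ⧸ Subgroup.center Q)
    have ha2 : a = a' * (a'⁻¹ * a) := by group
    have hb2 : b = b' * (b'⁻¹ * b) := by group
    have hza : a'⁻¹ * a ∈ Subgroup.center Q := ha
    have hzb : b'⁻¹ * b ∈ Subgroup.center Q := hb
    simp only
    rw [show ⁅a, b⁆ = ⁅a' * (a'⁻¹ * a), b' * (b'⁻¹ * b)⁆ by rw [← ha2, ← hb2]]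
    exact (Aux.commutator_mul_central a' b' _ _ hza hzb).symm
  haveI hfcomm : Finite (commutator Q) := inferInstance
  -- the abelianization of `Q` is finite
  haveI hfab : Finite (Q ⧸ commutator Q) := by
    let p : Q →* Q ⧸ commutator Q := QuotientGroup.mk' (commutator Q)
    set c := p (π (Rack.toEnvelGroup X x₀)) with hc
    -- c has finite order
    have hnpos : 0 < n := by
      haveI : Finite (X ≃ X) := inferInstance
      exact hn ▸ orderOf_pos _
    have hcn : c ^ n = 1 := by
      rw [hc, ← map_pow, ← map_pow]
      have hmem : (Rack.toEnvelGroup X x₀ : Rack.EnvelGroup X) ^ n ∈ N :=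
        Subgroup.subset_normalClosure rfl
      have : π ((Rack.toEnvelGroup X x₀ : Rack.EnvelGroup X) ^ n) = 1 :=
        (QuotientGroup.eq_one_iff _).mpr hmem
      rw [this, map_one]
    have hfin : IsOfFinOrder c := isOfFinOrder_iff_pow_eq_one.mpr ⟨n, hnpos, hcn⟩
    -- every generator maps to c
    have hgen : ∀ y : X, p (π (Rack.toEnvelGroup X y)) = c := by
      intro y
      obtain ⟨φ, hφ, hφy⟩ := hconn x₀ y
      have hφrange : φ ∈ (Rack.envelAction (R := X)).range := by
        refine Subgroup.closure_le (K := (Rack.envelAction (R := X)).range)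
            |>.mpr ?_ hφ
        rintro - ⟨x, rfl⟩
        exact ⟨Rack.toEnvelGroup X x, Aux.envelAction_toEnvelGroup x⟩
      obtain ⟨w, hw⟩ := hφrange
      have h1 : w * Rack.toEnvelGroup X x₀ * w⁻¹ = Rack.toEnvelGroup X y := by
        rw [Aux.conj_gen, hw, hφy]
      rw [← h1]
      simp only [map_mul, map_inv]
      have hcomm : ⁅p (π w), p (π (Rack.toEnvelGroup X x₀))⁆ = 1 := by
        have hmem : ⁅π w, π (Rack.toEnvelGroup X x₀)⁆ ∈ commutator Q :=
          Subgroup.commutator_mem_commutator (Subgroup.mem_top _) (Subgroup.mem_top _)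
        have h2 : p ⁅π w, π (Rack.toEnvelGroup X x₀)⁆ = 1 :=
          (QuotientGroup.eq_one_iff _).mpr hmem
        rw [← h2]
        simp [commutatorElement_def]
      have h3 : (p (π w) * p (π (Rack.toEnvelGroup X x₀)) * (p (π w))⁻¹)
          * (p (π (Rack.toEnvelGroup X x₀)))⁻¹
          = ⁅p (π w), p (π (Rack.toEnvelGroup X x₀))⁆ := by
        rw [commutatorElement_def]
      have h4 := h3.trans hcomm
      rw [mul_inv_eq_one] at h4
      rw [h4, hc]
    -- Q ⧸ commutator Q is generated by c
    have hall : ∀ q : Q ⧸ commutator Q, q ∈ Subgroup.zpowers c := by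
      intro q
      obtain ⟨w, rfl⟩ := QuotientGroup.mk_surjective q
      have : (QuotientGroup.mk w : Q ⧸ commutator Q) = p w := rfl
      rw [this]
      obtain ⟨v, rfl⟩ := hπsurj w
      have := Aux.mem_of_gen (p.comp π) (Subgroup.zpowers c)
        (fun x => by
          simp only [MonoidHom.comp_apply]
          rw [hgen x]
          exact Subgroup.mem_zpowers c) v
      simpa using this
    have htop : Subgroup.zpowers c = ⊤ := by
      rw [eq_top_iff]; intro q _; exact hall q
    haveI : Finite (Subgroup.zpowers c) := hfin.finite_zpowers
    rw [htop] at this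
    exact Finite.of_equiv _ Subgroup.topEquiv.toEquiv
  -- conclude
  exact Finite.of_equiv _ (Subgroup.groupEquivQuotientProdSubgroup (s := commutator Q)).symm
end

section
/- For n ≥ 3, the finite enveloping group of the permutation quandle ℙ_n is isomorphic to the symmetric group S_n. Precisely, the quotient of As(ℙ_n) by the normal closure of {g_{(1 2)}²} is isomorphic to S_n via the map sending the class of g_{(i j)} to the transposition (i j). -/
open Quandles

/-- The permutation quandle `ℙ_n`: the set of all transpositions of `S_n`. -/
def PermQuandle (n : ℕ) : Type := {σ : Equiv.Perm (Fin n) // σ.IsSwap}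

lemma isSwap_conj {n : ℕ} (σ : Equiv.Perm (Fin n)) {τ : Equiv.Perm (Fin n)}
    (hτ : τ.IsSwap) : (σ * τ * σ⁻¹).IsSwap := by
  obtain ⟨x, y, hxy, rfl⟩ := hτ
  exact ⟨σ x, σ y, fun h => hxy (σ.injective h), (Equiv.swap_apply_apply σ x y).symm⟩

/-- The quandle (in particular rack) structure on `ℙ_n`, given by conjugation
`σ ▷ τ = σ * τ * σ⁻¹`. -/
instance (n : ℕ) : Rack (PermQuandle n) where
  act x y := ⟨x.1 * y.1 * x.1⁻¹, isSwap_conj x.1 y.2⟩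
  self_distrib := by
    rintro ⟨x, _⟩ ⟨y, _⟩ ⟨z, _⟩
    refine Subtype.ext ?_
    show x * (y * z * y⁻¹) * x⁻¹
        = (x * y * x⁻¹) * (x * z * x⁻¹) * (x * y * x⁻¹)⁻¹
    group
  invAct x y := ⟨x.1⁻¹ * y.1 * x.1, by simpa using isSwap_conj x.1⁻¹ y.2⟩
  left_inv := by
    rintro ⟨x, _⟩ ⟨y, _⟩
    refine Subtype.ext ?_
    show x⁻¹ * (x * y * x⁻¹) * x = y
    group
  right_inv := by
    rintro ⟨x, _⟩ ⟨y, _⟩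
    refine Subtype.ext ?_
    show x * (x⁻¹ * y * x) * x⁻¹ = y
    group

namespace PermQAux

/-- The quandle morphism from the permutation quandle to the conjugation quandle of `S_n`. -/
def permQHom (n : ℕ) : PermQuandle n →◃ Quandle.Conj (Equiv.Perm (Fin n)) where
  toFun := Subtype.val
  map_act' := by intro x y; rfl

/-- The normal closure that defines the finite enveloping group. -/
def NCl (n : ℕ) (hn : 3 ≤ n) : Subgroup (Rack.EnvelGroup (PermQuandle n)) :=
  Subgroup.normalClosure
    {(Rack.toEnvelGroup (PermQuandle n)
        ⟨Equiv.swap ⟨0, Nat.lt_of_lt_of_le (by decide) hn⟩ ⟨1, Nat.lt_of_lt_of_le (by decide) hn⟩,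
          ⟨⟨0, Nat.lt_of_lt_of_le (by decide) hn⟩, ⟨1, Nat.lt_of_lt_of_le (by decide) hn⟩, Fin.ne_of_val_ne (by simp), rfl⟩⟩
      : Rack.EnvelGroup (PermQuandle n)) ^ 2}

instance (n : ℕ) (hn : 3 ≤ n) : (NCl n hn).Normal := Subgroup.normalClosure_normal

/-- The finite enveloping group. -/
abbrev QG (n : ℕ) (hn : 3 ≤ n) := Rack.EnvelGroup (PermQuandle n) ⧸ NCl n hn

variable (n : ℕ) (hn : 3 ≤ n)

def mkQ : Rack.EnvelGroup (PermQuandle n) →* QG n hn := QuotientGroup.mk' (NCl n hn)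

def genQ (t : PermQuandle n) : QG n hn := mkQ n hn (Rack.toEnvelGroup (PermQuandle n) t)

lemma genQ_congr {x y : PermQuandle n} (h : x.1 = y.1) : genQ n hn x = genQ n hn y := by
  cases Subtype.ext h; rfl

lemma toEnvel_act (x y : PermQuandle n) :
    Rack.toEnvelGroup (PermQuandle n) (x ◃ y)
      = Rack.toEnvelGroup (PermQuandle n) x * Rack.toEnvelGroup (PermQuandle n) y
        * (Rack.toEnvelGroup (PermQuandle n) x)⁻¹ := by
  have h := ShelfHom.map_act (Rack.toEnvelGroup (PermQuandle n)) (x := x) (y := y)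
  rw [h]; rfl

lemma genQ_conj (x y : PermQuandle n) :
    genQ n hn x * genQ n hn y * (genQ n hn x)⁻¹ = genQ n hn (x ◃ y) := by
  unfold genQ
  rw [toEnvel_act, map_mul, map_mul, map_inv]

/-- A transposition, as an element of the permutation quandle. -/
def tr {n : ℕ} (a b : Fin n) (h : a ≠ b) : PermQuandle n := ⟨Equiv.swap a b, a, b, h, rfl⟩

lemma swap_conj {n : ℕ} (σ : Equiv.Perm (Fin n)) (x y : Fin n) :
    σ * Equiv.swap x y * σ⁻¹ = Equiv.swap (σ x) (σ y) := (Equiv.swap_apply_apply σ x y).symm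

lemma genQ_tr_conj {a b c d : Fin n} (hab : a ≠ b) (hcd : c ≠ d)
    (h' : Equiv.swap a b c ≠ Equiv.swap a b d) :
    genQ n hn (tr a b hab) * genQ n hn (tr c d hcd) * (genQ n hn (tr a b hab))⁻¹
      = genQ n hn (tr (Equiv.swap a b c) (Equiv.swap a b d) h') := by
  rw [genQ_conj]
  exact genQ_congr n hn (swap_conj _ c d)

lemma genQ_sq0 :
    genQ n hn (tr (⟨0, Nat.lt_of_lt_of_le (by decide) hn⟩ : Fin n) ⟨1, Nat.lt_of_lt_of_le (by decide) hn⟩ (Fin.ne_of_val_ne (by simp))) ^ 2 = 1 := by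
  unfold genQ mkQ
  rw [← map_pow]
  rw [QuotientGroup.mk'_apply, QuotientGroup.eq_one_iff]
  exact Subgroup.subset_normalClosure rfl

lemma genQ_tr_comm {a b : Fin n} (hab : a ≠ b) (hba : b ≠ a) :
    genQ n hn (tr a b hab) = genQ n hn (tr b a hba) :=
  genQ_congr n hn (Equiv.swap_comm a b)

lemma sq_step {c d e : Fin n} (hcd : c ≠ d) (hce : c ≠ e) (hed : e ≠ d)
    (h : genQ n hn (tr c d hcd) ^ 2 = 1) :
    genQ n hn (tr c e hce) ^ 2 = 1 := by
  have hde : d ≠ e := fun h' => hed h'.symm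
  have key := genQ_tr_conj n hn hde hcd (c := c) (d := d)
    (by
      rw [Equiv.swap_apply_of_ne_of_ne (fun h' => hcd h') (fun h' => hce h'),
        Equiv.swap_apply_left]
      exact hce)
  have hc' : Equiv.swap d e c = c :=
    Equiv.swap_apply_of_ne_of_ne (fun h' => hcd h') (fun h' => hce h')
  have hd' : Equiv.swap d e d = e := Equiv.swap_apply_left d e
  have heq : genQ n hn (tr c e hce)
      = genQ n hn (tr d e hde) * genQ n hn (tr c d hcd) * (genQ n hn (tr d e hde))⁻¹ := by
    rw [key]
    refine genQ_congr n hn ?_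
    show Equiv.swap c e = Equiv.swap ((Equiv.swap d e) c) ((Equiv.swap d e) d)
    rw [hc', hd']
  rw [pow_two] at h ⊢
  rw [heq]
  calc genQ n hn (tr d e hde) * genQ n hn (tr c d hcd) * (genQ n hn (tr d e hde))⁻¹ *
        (genQ n hn (tr d e hde) * genQ n hn (tr c d hcd) * (genQ n hn (tr d e hde))⁻¹)
      = genQ n hn (tr d e hde) * (genQ n hn (tr c d hcd) * genQ n hn (tr c d hcd)) *
        (genQ n hn (tr d e hde))⁻¹ := by group
    _ = 1 := by rw [h]; group

lemma sq_all (t : PermQuandle n) : genQ n hn t ^ 2 = 1 := by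
  obtain ⟨a, b, hab, ht⟩ := t.2
  have hz01 : (⟨0, Nat.lt_of_lt_of_le (by decide) hn⟩ : Fin n) ≠ ⟨1, Nat.lt_of_lt_of_le (by decide) hn⟩ := Fin.ne_of_val_ne (by simp)
  set z0 : Fin n := ⟨0, Nat.lt_of_lt_of_le (by decide) hn⟩ with hz0
  set z1 : Fin n := ⟨1, Nat.lt_of_lt_of_le (by decide) hn⟩ with hz1
  have base : genQ n hn (tr z0 z1 hz01) ^ 2 = 1 := genQ_sq0 n hn
  have claim1 : ∀ (x : Fin n) (hx : z0 ≠ x), genQ n hn (tr z0 x hx) ^ 2 = 1 := by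
    intro x hx
    by_cases hx1 : x = z1
    · subst hx1; exact base
    · exact sq_step n hn hz01 hx (fun h => hx1 h) base
  have claim2 : ∀ (a b : Fin n) (h : a ≠ b), genQ n hn (tr a b h) ^ 2 = 1 := by
    intro a b h
    by_cases ha0 : a = z0
    · subst ha0; exact claim1 b h
    · by_cases hb0 : b = z0
      · subst hb0
        rw [genQ_tr_comm n hn h (fun h' => h h'.symm)]
        exact claim1 a (fun h' => ha0 h'.symm)
      · have h1 : genQ n hn (tr a z0 ha0) ^ 2 = 1 := by
          rw [genQ_tr_comm n hn ha0 (fun h' => ha0 h'.symm)]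
          exact claim1 a (fun h' => ha0 h'.symm)
        exact sq_step n hn ha0 h (fun h' => hb0 h') h1
  have : t = tr a b hab := Subtype.ext ht
  rw [this]; exact claim2 a b hab

lemma genQ_mul_self (t : PermQuandle n) : genQ n hn t * genQ n hn t = 1 := by
  have := sq_all n hn t; rwa [pow_two] at this

lemma genQ_inv (t : PermQuandle n) : (genQ n hn t)⁻¹ = genQ n hn t :=
  inv_eq_of_mul_eq_one_right (genQ_mul_self n hn t)

/-- `π` fixes all points with value `≥ m`. -/
def Fixd (m : ℕ) (π : Equiv.Perm (Fin n)) : Prop := ∀ j : Fin n, m ≤ (j : ℕ) → π j = j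

/-- Bubble-sort section: a canonical word for each permutation. -/
def FF : ℕ → Equiv.Perm (Fin n) → QG n hn
  | 0, _ => 1
  | m+1, π =>
    if hm : m < n then
      if hc : π ⟨m, hm⟩ = ⟨m, hm⟩ then FF m π
      else genQ n hn (tr (π ⟨m, hm⟩) ⟨m, hm⟩ hc)
          * FF m (Equiv.swap (π ⟨m, hm⟩) ⟨m, hm⟩ * π)
    else FF m π

lemma FF_succ_fix (m : ℕ) (hm : m < n) (π : Equiv.Perm (Fin n))
    (hc : π ⟨m, hm⟩ = ⟨m, hm⟩) : FF n hn (m+1) π = FF n hn m π := by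
  rw [FF, dif_pos hm, dif_pos hc]

lemma FF_succ_move (m : ℕ) (hm : m < n) (π : Equiv.Perm (Fin n))
    (hc : π ⟨m, hm⟩ ≠ ⟨m, hm⟩) :
    FF n hn (m+1) π = genQ n hn (tr (π ⟨m, hm⟩) ⟨m, hm⟩ hc)
      * FF n hn m (Equiv.swap (π ⟨m, hm⟩) ⟨m, hm⟩ * π) := by
  rw [FF, dif_pos hm, dif_neg hc]

lemma fixd_val_lt {m : ℕ} (hm : m < n) {π : Equiv.Perm (Fin n)} (hfix : Fixd n (m+1) π)
    (hc : π ⟨m, hm⟩ ≠ ⟨m, hm⟩) : ((π ⟨m, hm⟩ : Fin n) : ℕ) < m := by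
  rcases Nat.lt_or_ge ((π ⟨m, hm⟩ : Fin n) : ℕ) m with h | h
  · exact h
  · exfalso
    rcases Nat.eq_or_lt_of_le h with h' | h'
    · exact hc (Fin.ext h'.symm)
    · have := hfix (π ⟨m, hm⟩) h'
      have := π.injective this
      rw [this] at hc
      exact hc rfl

lemma fixd_step {m : ℕ} (hm : m < n) {π : Equiv.Perm (Fin n)} (hfix : Fixd n (m+1) π) :
    Fixd n m (Equiv.swap (π ⟨m, hm⟩) ⟨m, hm⟩ * π) := by
  intro j hj
  by_cases hjm : (j : ℕ) = m
  · have hjM : j = ⟨m, hm⟩ := Fin.ext hjm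
    subst hjM
    rw [Equiv.Perm.mul_apply, Equiv.swap_apply_left]
  · have hπj : π j = j := hfix j (by omega)
    rw [Equiv.Perm.mul_apply, hπj]
    refine Equiv.swap_apply_of_ne_of_ne ?_ ?_
    · intro h
      have : π j = π ⟨m, hm⟩ := by rw [hπj, h]
      have := π.injective this
      exact hjm (congrArg Fin.val this)
    · intro h; exact hjm (congrArg Fin.val h)

lemma fixd_of_fix {m : ℕ} (hm : m < n) {π : Equiv.Perm (Fin n)} (hfix : Fixd n (m+1) π)
    (hc : π ⟨m, hm⟩ = ⟨m, hm⟩) : Fixd n m π := by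
  intro j hj
  by_cases hjm : (j : ℕ) = m
  · have hjM : j = ⟨m, hm⟩ := Fin.ext hjm
    subst hjM; exact hc
  · exact hfix j (by omega)

lemma FF_one : ∀ m : ℕ, FF n hn m 1 = 1 := by
  intro m
  induction m with
  | zero => rfl
  | succ m IH =>
    by_cases hm : m < n
    · rw [FF_succ_fix n hn m hm 1 rfl]; exact IH
    · rw [FF, dif_neg hm]; exact IH

lemma FF_swap_mul : ∀ m : ℕ, m ≤ n → ∀ (a b : Fin n) (hab : a ≠ b),
    (a : ℕ) < m → (b : ℕ) < m → ∀ π : Equiv.Perm (Fin n), Fixd n m π →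
    FF n hn m (Equiv.swap a b * π) = genQ n hn (tr a b hab) * FF n hn m π := by
  intro m
  induction m with
  | zero => intro _ a _ _ ha; omega
  | succ m IH =>
    intro hmn a₀ b₀ hab₀ ha₀ hb₀ π hfix
    have hm : m < n := by omega
    set M : Fin n := ⟨m, hm⟩ with hM
    have key : ∀ (a b : Fin n) (hab : a ≠ b), (a : ℕ) < m + 1 → (b : ℕ) < m + 1 → a ≠ M →
        FF n hn (m+1) (Equiv.swap a b * π)
          = genQ n hn (tr a b hab) * FF n hn (m+1) π := by
      intro a b hab ha hb haM
      have haM' : (a : ℕ) < m := by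
        have : (a : ℕ) ≠ m := fun h => haM (Fin.ext h)
        omega
      by_cases hbM : b = M
      · -- case B : b = M
        subst hbM
        by_cases hcM : π M = M
        · -- π fixes M
          have h1 : (Equiv.swap a M * π) M = a := by
            rw [Equiv.Perm.mul_apply, hcM, Equiv.swap_apply_right]
          have h1' : (Equiv.swap a M * π) M ≠ M := by rw [h1]; exact haM
          rw [FF_succ_move n hn m hm _ h1', FF_succ_fix n hn m hm π hcM]
          have h2 : Equiv.swap ((Equiv.swap a M * π) M) M * (Equiv.swap a M * π) = π := by
            rw [h1, ← mul_assoc, Equiv.swap_mul_self, one_mul]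
          rw [h2]
          have e1 : genQ n hn (tr ((Equiv.swap a M * π) M) M h1') = genQ n hn (tr a M hab) := by
            refine genQ_congr n hn ?_
            show Equiv.swap ((Equiv.swap a M * π) M) M = Equiv.swap a M
            rw [h1]
          rw [e1]
        · -- π moves M
          by_cases hca : π M = a
          · have h1 : (Equiv.swap a M * π) M = M := by
              rw [Equiv.Perm.mul_apply, hca, Equiv.swap_apply_left]
            rw [FF_succ_fix n hn m hm _ h1, FF_succ_move n hn m hm π hcM]
            have e1 : genQ n hn (tr (π M) M hcM) = genQ n hn (tr a M hab) := by
              refine genQ_congr n hn ?_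
              show Equiv.swap (π M) M = Equiv.swap a M
              rw [hca]
            rw [e1, ← mul_assoc, genQ_mul_self, one_mul, hca]
          · -- π M ∉ {a, M}
            have hcval : ((π M : Fin n) : ℕ) < m := fixd_val_lt n hm hfix hcM
            have h1 : (Equiv.swap a M * π) M = π M := by
              rw [Equiv.Perm.mul_apply, Equiv.swap_apply_of_ne_of_ne hca hcM]
            have h1' : (Equiv.swap a M * π) M ≠ M := by rw [h1]; exact hcM
            rw [FF_succ_move n hn m hm _ h1', FF_succ_move n hn m hm π hcM]
            have h2 : Equiv.swap ((Equiv.swap a M * π) M) M * (Equiv.swap a M * π)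
                = Equiv.swap (π M) a * (Equiv.swap (π M) M * π) := by
              rw [h1]
              have e := swap_conj (Equiv.swap (π M) M) a M
              have ea : Equiv.swap (π M) M a = a :=
                Equiv.swap_apply_of_ne_of_ne (fun h => hca h.symm) haM
              have eM : Equiv.swap (π M) M M = π M := Equiv.swap_apply_right _ _
              rw [ea, eM] at e
              have e' : Equiv.swap (π M) M * Equiv.swap a M = Equiv.swap a (π M) * Equiv.swap (π M) M :=
                mul_inv_eq_iff_eq_mul.mp e
              calc Equiv.swap (π M) M * (Equiv.swap a M * π)
                  = (Equiv.swap (π M) M * Equiv.swap a M) * π := by rw [mul_assoc]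
                _ = (Equiv.swap a (π M) * Equiv.swap (π M) M) * π := by rw [e']
                _ = Equiv.swap (π M) a * (Equiv.swap (π M) M * π) := by
                    rw [Equiv.swap_comm a (π M), mul_assoc]
            rw [h2, IH hm.le (π M) a hca hcval haM' _ (fixd_step n hm hfix)]
            have e1 : genQ n hn (tr ((Equiv.swap a M * π) M) M h1')
                = genQ n hn (tr (π M) M hcM) := by
              refine genQ_congr n hn ?_
              show Equiv.swap ((Equiv.swap a M * π) M) M = Equiv.swap (π M) M
              rw [h1]
            rw [e1]
            have conj := genQ_tr_conj n hn (a := π M) (b := M) (c := π M) (d := a) hcM hca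
              ((Equiv.injective _).ne hca)
            have econj : genQ n hn (tr (Equiv.swap (π M) M (π M)) (Equiv.swap (π M) M a)
                ((Equiv.injective _).ne hca))
                = genQ n hn (tr a M hab) := by
              refine genQ_congr n hn ?_
              show Equiv.swap (Equiv.swap (π M) M (π M)) (Equiv.swap (π M) M a) = Equiv.swap a M
              rw [Equiv.swap_apply_left,
                Equiv.swap_apply_of_ne_of_ne (fun h => hca h.symm) haM, Equiv.swap_comm]
            rw [econj] at conj
            rw [← conj]
            group
            simp only [← hM]
            group
      · -- case A : a ≠ M, b ≠ M
        have hbM' : (b : ℕ) < m := by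
          have : (b : ℕ) ≠ m := fun h => hbM (Fin.ext h)
          omega
        have hswapM : Equiv.swap a b M = M :=
          Equiv.swap_apply_of_ne_of_ne (Ne.symm haM) (Ne.symm hbM)
        by_cases hcM : π M = M
        · have h1 : (Equiv.swap a b * π) M = M := by
            rw [Equiv.Perm.mul_apply, hcM, hswapM]
          rw [FF_succ_fix n hn m hm _ h1, FF_succ_fix n hn m hm π hcM]
          exact IH hm.le a b hab haM' hbM' π (fixd_of_fix n hm hfix hcM)
        · have hcval : ((π M : Fin n) : ℕ) < m := fixd_val_lt n hm hfix hcM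
          have hXM : Equiv.swap a b (π M) ≠ M := by
            intro h
            have : Equiv.swap a b (π M) = Equiv.swap a b M := by rw [h, hswapM]
            exact hcM ((Equiv.swap a b).injective this)
          have h1 : (Equiv.swap a b * π) M = Equiv.swap a b (π M) := Equiv.Perm.mul_apply _ _ _
          have h1' : (Equiv.swap a b * π) M ≠ M := by rw [h1]; exact hXM
          rw [FF_succ_move n hn m hm _ h1', FF_succ_move n hn m hm π hcM]
          have h2 : Equiv.swap ((Equiv.swap a b * π) M) M * (Equiv.swap a b * π)
              = Equiv.swap a b * (Equiv.swap (π M) M * π) := by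
            rw [h1]
            have e := swap_conj (Equiv.swap a b) (π M) M
            rw [hswapM] at e
            rw [← e]
            group
          rw [h2, IH hm.le a b hab haM' hbM' _ (fixd_step n hm hfix)]
          have conj := genQ_tr_conj n hn (a := a) (b := b) (c := π M) (d := M) hab hcM
            ((Equiv.injective _).ne hcM)
          have econj : genQ n hn (tr (Equiv.swap a b (π M)) (Equiv.swap a b M)
              ((Equiv.injective _).ne hcM))
              = genQ n hn (tr ((Equiv.swap a b * π) M) M h1') := by
            refine genQ_congr n hn ?_
            show Equiv.swap (Equiv.swap a b (π M)) (Equiv.swap a b M)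
              = Equiv.swap ((Equiv.swap a b * π) M) M
            rw [hswapM, h1]
          rw [econj] at conj
          rw [← conj]
          group
          rfl
    by_cases haM : a₀ = M
    · have hbM : b₀ ≠ M := fun h => hab₀ (by rw [haM, h])
      have e1 : Equiv.swap a₀ b₀ = Equiv.swap b₀ a₀ := Equiv.swap_comm _ _
      have e2 : genQ n hn (tr a₀ b₀ hab₀) = genQ n hn (tr b₀ a₀ (Ne.symm hab₀)) :=
        genQ_congr n hn e1
      rw [e1, e2]
      exact key b₀ a₀ (Ne.symm hab₀) hb₀ ha₀ hbM
    · exact key a₀ b₀ hab₀ ha₀ hb₀ haM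

def sFun (π : Equiv.Perm (Fin n)) : QG n hn := FF n hn n π

lemma sFun_swap_mul (a b : Fin n) (hab : a ≠ b) (π : Equiv.Perm (Fin n)) :
    sFun n hn (Equiv.swap a b * π) = genQ n hn (tr a b hab) * sFun n hn π :=
  FF_swap_mul n hn n le_rfl a b hab a.isLt b.isLt π (fun j hj => absurd j.isLt (by omega))

lemma sFun_one : sFun n hn 1 = 1 := FF_one n hn n

lemma sFun_swap (a b : Fin n) (hab : a ≠ b) :
    sFun n hn (Equiv.swap a b) = genQ n hn (tr a b hab) := by
  have h := sFun_swap_mul n hn a b hab 1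
  rw [mul_one, sFun_one, mul_one] at h
  exact h

lemma sFun_mul (π σ : Equiv.Perm (Fin n)) :
    sFun n hn (π * σ) = sFun n hn π * sFun n hn σ := by
  have hmem : π ∈ Subgroup.closure {σ : Equiv.Perm (Fin n) | σ.IsSwap} := by
    rw [Equiv.Perm.closure_isSwap]; trivial
  induction hmem using Subgroup.closure_induction generalizing σ with
  | mem x hx =>
    obtain ⟨a, b, hab, rfl⟩ := hx
    rw [sFun_swap_mul n hn a b hab, sFun_swap n hn a b hab]
  | one => rw [one_mul, sFun_one, one_mul]
  | mul x y hx hy ihx ihy =>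
    rw [mul_assoc, ihx, ihy, ihx, ← mul_assoc]
  | inv x hx ihx =>
    have hinv : sFun n hn x⁻¹ = (sFun n hn x)⁻¹ := by
      have h := ihx x⁻¹
      rw [mul_inv_cancel, sFun_one] at h
      exact (inv_eq_of_mul_eq_one_right h.symm).symm
    have h2 := ihx (x⁻¹ * σ)
    rw [← mul_assoc, mul_inv_cancel, one_mul] at h2
    rw [hinv, h2]
    group

def sHom : Equiv.Perm (Fin n) →* QG n hn where
  toFun := sFun n hn
  map_one' := sFun_one n hn
  map_mul' := sFun_mul n hn

def fE : Rack.EnvelGroup (PermQuandle n) →* Equiv.Perm (Fin n) :=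
  Rack.toEnvelGroup.map (permQHom n)

lemma fE_gen (t : PermQuandle n) : fE n (Rack.toEnvelGroup (PermQuandle n) t) = t.1 := rfl

lemma NCl_le_ker : NCl n hn ≤ (fE n).ker := by
  refine Subgroup.normalClosure_le_normal ?_
  rintro x hx
  rw [Set.mem_singleton_iff] at hx
  subst hx
  rw [SetLike.mem_coe, MonoidHom.mem_ker, map_pow]
  show (Equiv.swap (⟨0, by omega⟩ : Fin n) ⟨1, by omega⟩) ^ 2 = 1
  rw [pow_two, Equiv.swap_mul_self]

def fbar : QG n hn →* Equiv.Perm (Fin n) :=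
  QuotientGroup.lift (NCl n hn) (fE n) (NCl_le_ker n hn)

lemma fbar_gen (t : PermQuandle n) : fbar n hn (genQ n hn t) = t.1 := rfl

lemma comp1 : (fbar n hn).comp (sHom n hn) = MonoidHom.id (Equiv.Perm (Fin n)) := by
  refine MonoidHom.ext fun π => ?_
  have hmem : π ∈ Subgroup.closure {σ : Equiv.Perm (Fin n) | σ.IsSwap} := by
    rw [Equiv.Perm.closure_isSwap]; trivial
  induction hmem using Subgroup.closure_induction with
  | mem x hx =>
    obtain ⟨a, b, hab, rfl⟩ := hx
    show fbar n hn (sFun n hn (Equiv.swap a b)) = Equiv.swap a b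
    rw [sFun_swap n hn a b hab, fbar_gen]
    rfl
  | one => simp
  | mul x y hx hy ihx ihy => simp only [MonoidHom.comp_apply, map_mul, MonoidHom.id_apply] at *
                             rw [ihx, ihy]
  | inv x hx ihx => simp only [MonoidHom.comp_apply, map_inv, MonoidHom.id_apply] at *
                    rw [ihx]

lemma comp2 : (sHom n hn).comp (fbar n hn) = MonoidHom.id (QG n hn) := by
  refine MonoidHom.ext fun q => ?_
  refine QuotientGroup.induction_on q ?_
  intro g
  refine Quotient.inductionOn g ?_
  intro x
  simp only [MonoidHom.comp_apply, MonoidHom.id_apply]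
  induction x with
  | unit =>
    have e : (QuotientGroup.mk (⟦Rack.PreEnvelGroup.unit⟧ : Rack.EnvelGroup (PermQuandle n))
        : QG n hn) = 1 := rfl
    rw [e, map_one, map_one]
  | incl t =>
    have e : (QuotientGroup.mk (⟦Rack.PreEnvelGroup.incl t⟧ : Rack.EnvelGroup (PermQuandle n))
        : QG n hn) = genQ n hn t := rfl
    rw [e]
    obtain ⟨a, b, hab, ht⟩ := t.2
    calc sHom n hn (fbar n hn (genQ n hn t)) = sFun n hn t.1 := by rw [fbar_gen]; rfl
      _ = sFun n hn (Equiv.swap a b) := by rw [ht]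
      _ = genQ n hn (tr a b hab) := sFun_swap n hn a b hab
      _ = genQ n hn t := genQ_congr n hn ht.symm
  | mul x y ihx ihy =>
    have e : (⟦Rack.PreEnvelGroup.mul x y⟧ : Rack.EnvelGroup (PermQuandle n))
        = (show Rack.EnvelGroup (PermQuandle n) from ⟦x⟧)
          * (show Rack.EnvelGroup (PermQuandle n) from ⟦y⟧) := rfl
    rw [e, QuotientGroup.mk_mul, map_mul, map_mul, ihx, ihy]
  | inv x ihx =>
    have e : (⟦Rack.PreEnvelGroup.inv x⟧ : Rack.EnvelGroup (PermQuandle n))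
        = (show Rack.EnvelGroup (PermQuandle n) from ⟦x⟧)⁻¹ := rfl
    rw [e, QuotientGroup.mk_inv, map_inv, map_inv, ihx]

end PermQAux

/-- For `n ≥ 3`, the finite enveloping group of the permutation quandle
`ℙ_n`, i.e. the quotient of `As(ℙ_n)` by the normal closure of `{g_{(1 2)}²}`, is
isomorphic to the symmetric group `S_n` via the map sending the class of `g_{(i j)}`
to the transposition `(i j)`. -/
theorem finite_envelGroup_permQuandle_iso (n : ℕ) (hn : 3 ≤ n) :
    ∃ e : (Rack.EnvelGroup (PermQuandle n) ⧸ Subgroup.normalClosure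
        {(Rack.toEnvelGroup (PermQuandle n)
            ⟨Equiv.swap ⟨0, by omega⟩ ⟨1, by omega⟩,
              ⟨⟨0, by omega⟩, ⟨1, by omega⟩, by simp, rfl⟩⟩
          : Rack.EnvelGroup (PermQuandle n)) ^ 2}) ≃* Equiv.Perm (Fin n),
      ∀ σ : PermQuandle n,
        e (QuotientGroup.mk (Rack.toEnvelGroup (PermQuandle n) σ)) = σ.1 := by
  refine ⟨MonoidHom.toMulEquiv (PermQAux.fbar n hn) (PermQAux.sHom n hn)
    (PermQAux.comp2 n hn) (PermQAux.comp1 n hn), fun σ => ?_⟩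
  exact PermQAux.fbar_gen n hn σ
end

section
/- Let X be a nonempty trivial rack (x ▷ y = y for all x, y ∈ X) and let ρ : X → Conj(GL(V)) be an irreducible rack representation on a nonzero finite-dimensional complex vector space V. Then V is one-dimensional. -/
open Quandles

/-- Let `X` be a nonempty trivial rack (`x ◃ y = y` for all `x, y`) and
let `ρ` be an irreducible rack representation of `X` on a nonzero finite-dimensional
complex vector space `V`. Then `V` is one-dimensional. -/
theorem trivial_rack_irreducible_rep_one_dimensional (X : Type*) [Rack X] [Nonempty X]
    (htriv : ∀ x y : X, x ◃ y = y)
    (V : Type*) [AddCommGroup V] [Module ℂ V] [FiniteDimensional ℂ V] [Nontrivial V]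
    (ρ : X → (V ≃ₗ[ℂ] V)) (hρ : ∀ x y : X, ρ (x ◃ y) = ρ x * ρ y * (ρ x)⁻¹)
    (hirr : ∀ W : Submodule ℂ V, (∀ x : X, ∀ w ∈ W, ρ x w ∈ W) → W = ⊥ ∨ W = ⊤) :
    Module.finrank ℂ V = 1 := by
  -- all ρ x commute with each other
  have hcomm : ∀ x y : X, ρ x * ρ y = ρ y * ρ x := by
    intro x y
    have h := hρ x y
    rw [htriv] at h
    conv_rhs => rw [h]
    group
  -- each ρ x acts as a scalar
  have key : ∀ x : X, ∃ c : ℂ, ∀ v : V, ρ x v = c • v := by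
    intro x
    set f : Module.End ℂ V := (ρ x).toLinearMap
    obtain ⟨c, hc⟩ := Module.End.exists_eigenvalue f
    refine ⟨c, ?_⟩
    have hW : f.eigenspace c = ⊥ ∨ f.eigenspace c = ⊤ := by
      apply hirr
      intro y w hw
      rw [Module.End.mem_eigenspace_iff] at hw ⊢
      have hcy := hcomm x y
      have : f (ρ y w) = ρ y (f w) := by
        have := congrArg (fun g : V ≃ₗ[ℂ] V => g w) hcy
        simpa [f] using this
      rw [this, hw, map_smul]
    rcases hW with h | h
    · exact absurd h hc
    · intro v
      have hv : v ∈ f.eigenspace c := h ▸ Submodule.mem_top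
      rwa [Module.End.mem_eigenspace_iff] at hv
  -- a line is invariant, hence everything
  obtain ⟨v, hv⟩ := exists_ne (0 : V)
  have hW : Submodule.span ℂ {v} = ⊥ ∨ Submodule.span ℂ {v} = ⊤ := by
    apply hirr
    intro x w hw
    obtain ⟨c, hc⟩ := key x
    rw [hc w]
    exact Submodule.smul_mem _ _ hw
  rcases hW with h | h
  · exact absurd (Submodule.span_eq_bot.mp h v rfl) hv
  · rw [← finrank_top ℂ V, ← h, finrank_span_singleton hv]
end

section
/- Let X be a finite connected rack, x₀ ∈ X, n the common order of the permutations L_x, N the normal closure of {g_{x₀}^n} in As(X), and G̅_X = As(X)/N the finite enveloping group. Let (V, ρ) be a strong representation of X. Then there is a group homomorphism ρ̄ : G̅_X → GL(V) such that ρ̄(g_x·N) = ρ_x for all x ∈ X. Furthermore, if ρ is an irreducible rack representation, then ρ̄ is an irreducible group representation. -/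
open Quandles

/-!
By the universal property of the enveloping group, `ρ` extends to a homomorphism
`As(X) →* GL(V)`. The constant tuple `(x₀, …, x₀)` of length `n` is a stabilizing family,
so strongness forces `ρ_{x₀}^n = 1`; hence the extension kills `N` and descends to `G̅_X`.
A subspace invariant under all of `ρ̄` is in particular invariant under each `ρ_x = ρ̄(g_x N)`.
-/

namespace Rack

variable {X : Type*} [Rack X] {G : Type*} [Group G]

def envelGroupLift (ρ : X → G) (hρ : ∀ x y : X, ρ (x ◃ y) = ρ x * ρ y * (ρ x)⁻¹) :
    EnvelGroup X →* G :=
  toEnvelGroup.map ⟨ρ, fun {x y} => hρ x y⟩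

@[simp]
theorem envelGroupLift_toEnvelGroup (ρ : X → G)
    (hρ : ∀ x y : X, ρ (x ◃ y) = ρ x * ρ y * (ρ x)⁻¹) (x : X) :
    envelGroupLift ρ hρ (toEnvelGroup X x) = ρ x :=
  rfl

theorem pow_orderOf_act'_eq_one {ρ : X → G}
    (hstrong : ∀ l : List X,
      (l.map (fun x => (act' x : Equiv.Perm X))).prod = 1 → (l.map ρ).prod = 1) (x : X) :
    ρ x ^ orderOf (act' x : Equiv.Perm X) = 1 := by
  simpa only [List.map_replicate, List.prod_replicate] using
    hstrong (List.replicate (orderOf (act' x : Equiv.Perm X)) x)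
      (by simpa only [List.map_replicate, List.prod_replicate] using pow_orderOf_eq_one _)

theorem normalClosure_pow_orderOf_le_ker_envelGroupLift {ρ : X → G}
    (hρ : ∀ x y : X, ρ (x ◃ y) = ρ x * ρ y * (ρ x)⁻¹)
    (hstrong : ∀ l : List X,
      (l.map (fun x => (act' x : Equiv.Perm X))).prod = 1 → (l.map ρ).prod = 1) (x₀ : X) :
    Subgroup.normalClosure
        {(toEnvelGroup X x₀ : EnvelGroup X) ^ orderOf (act' x₀ : Equiv.Perm X)} ≤
      (envelGroupLift ρ hρ).ker := by
  refine Subgroup.normalClosure_le_normal (Set.singleton_subset_iff.mpr ?_)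
  rw [SetLike.mem_coe, MonoidHom.mem_ker, map_pow, envelGroupLift_toEnvelGroup]
  exact pow_orderOf_act'_eq_one hstrong x₀

end Rack

theorem strong_rep_induces_rep_of_finite_envelGroup_general (X : Type*) [Rack X]
    (x₀ : X)
    (V : Type*) [AddCommGroup V] [Module ℂ V]
    (ρ : X → (V ≃ₗ[ℂ] V)) (hρ : ∀ x y : X, ρ (x ◃ y) = ρ x * ρ y * (ρ x)⁻¹)
    (hstrong : ∀ l : List X,
      (l.map (fun x => (Rack.act' x : Equiv.Perm X))).prod = 1 → (l.map ρ).prod = 1) :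
    ∃ ρbar : (Rack.EnvelGroup X ⧸ Subgroup.normalClosure
        {(Rack.toEnvelGroup X x₀ : Rack.EnvelGroup X)
          ^ orderOf (Rack.act' x₀ : Equiv.Perm X)}) →* (V ≃ₗ[ℂ] V),
      (∀ x : X,
        ρbar (QuotientGroup.mk (Rack.toEnvelGroup X x : Rack.EnvelGroup X)) = ρ x) ∧
      ((∀ W : Submodule ℂ V, (∀ x : X, ∀ w ∈ W, ρ x w ∈ W) → W = ⊥ ∨ W = ⊤) →
        (∀ W : Submodule ℂ V, (∀ h, ∀ w ∈ W, ρbar h w ∈ W) → W = ⊥ ∨ W = ⊤)) := by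
  refine ⟨QuotientGroup.lift _ (Rack.envelGroupLift ρ hρ)
    (Rack.normalClosure_pow_orderOf_le_ker_envelGroupLift hρ hstrong x₀), fun x => rfl, ?_⟩
  intro hirr W hW
  exact hirr W fun x => hW (QuotientGroup.mk (Rack.toEnvelGroup X x))

/-- Let `X` be a finite connected rack, `x₀ ∈ X`, `n` the (common) order
of the permutations `L_x`, `N` the normal closure of `{g_{x₀}^n}` in `As(X)`, and
`G̅_X = As(X)/N` the finite enveloping group. Every strong representation `(V, ρ)` of `X`
induces a group homomorphism `ρ̄ : G̅_X →* GL(V)` with `ρ̄(g_x · N) = ρ_x` for all `x`;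
moreover if `ρ` is irreducible as a rack representation then `ρ̄` is irreducible as a
group representation. -/
theorem strong_rep_induces_rep_of_finite_envelGroup (X : Type*) [Rack X] [Fintype X]
    (hconn : ∀ x y : X, ∃ φ ∈ Subgroup.closure
      (Set.range (fun x : X => (Rack.act' x : Equiv.Perm X))), φ x = y)
    (x₀ : X)
    (V : Type*) [AddCommGroup V] [Module ℂ V]
    (ρ : X → (V ≃ₗ[ℂ] V)) (hρ : ∀ x y : X, ρ (x ◃ y) = ρ x * ρ y * (ρ x)⁻¹)
    (hstrong : ∀ l : List X,
      (l.map (fun x => (Rack.act' x : Equiv.Perm X))).prod = 1 → (l.map ρ).prod = 1) :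
    ∃ ρbar : (Rack.EnvelGroup X ⧸ Subgroup.normalClosure
        {(Rack.toEnvelGroup X x₀ : Rack.EnvelGroup X)
          ^ orderOf (Rack.act' x₀ : Equiv.Perm X)}) →* (V ≃ₗ[ℂ] V),
      (∀ x : X,
        ρbar (QuotientGroup.mk (Rack.toEnvelGroup X x : Rack.EnvelGroup X)) = ρ x) ∧
      ((∀ W : Submodule ℂ V, (∀ x : X, ∀ w ∈ W, ρ x w ∈ W) → W = ⊥ ∨ W = ⊤) →
        (∀ W : Submodule ℂ V, (∀ h, ∀ w ∈ W, ρbar h w ∈ W) → W = ⊥ ∨ W = ⊤)) :=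
  strong_rep_induces_rep_of_finite_envelGroup_general X x₀ V ρ hρ hstrong
end

section
/- Let X be a finite connected rack with finite enveloping group G̅_X = As(X)/N (N the normal closure of {g_{x₀}^n}, n the common order of the L_x), and suppose the center of G̅_X is trivial. Then for any group homomorphism ρ̄ : G̅_X → GL(V), the induced rack representation ρ of X defined by ρ_x := ρ̄(g_x·N) is strong: for every stabilizing family (u₁, …, u_k) of X (i.e. L_{u_k} ∘ ⋯ ∘ L_{u_1} = id on X), one has ρ_{u_k} ∘ ⋯ ∘ ρ_{u_1} = id on V. -/
/-!
Let `P = g_{u_k} ⋯ g_{u_1}` in `As(X)`. Conjugation by any `g ∈ As(X)` sends `g_y` to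
`g_{g · y}`, so if `P` acts trivially on `X` it commutes with every generator and is central
in `As(X)`. Its image in the quotient `G̅_X` is then central, hence trivial, and
`ρ_{u_k} ∘ ⋯ ∘ ρ_{u_1} = ρ̄(P N) = id`.
-/

theorem MonoidHom.map_mem_center_of_surjective {G H : Type*} [Group G] [Group H] (f : G →* H)
    (hf : Function.Surjective f) {g : G} (hg : g ∈ Subgroup.center G) :
    f g ∈ Subgroup.center H := by
  rw [Subgroup.mem_center_iff] at hg ⊢
  intro h
  obtain ⟨h, rfl⟩ := hf h
  rw [← map_mul, ← map_mul, hg h]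

namespace Rack

variable {R : Type*} [Rack R]

theorem closure_range_toEnvelGroup :
    Subgroup.closure (Set.range (toEnvelGroup R : R → EnvelGroup R)) = ⊤ := by
  rw [eq_top_iff]
  rintro g -
  induction g using Quotient.inductionOn with
  | h a =>
    induction a with
    | unit => exact Subgroup.one_mem _
    | incl x => exact Subgroup.subset_closure ⟨x, rfl⟩
    | mul a b iha ihb => exact Subgroup.mul_mem _ iha ihb
    | inv a iha => exact Subgroup.inv_mem _ iha

theorem toEnvelGroup_envelAction (g : EnvelGroup R) (y : R) :
    (toEnvelGroup R (envelAction g y) : EnvelGroup R) = g * toEnvelGroup R y * g⁻¹ := by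
  have hg : g ∈ Subgroup.closure (Set.range (toEnvelGroup R : R → EnvelGroup R)) :=
    closure_range_toEnvelGroup (R := R) ▸ Subgroup.mem_top g
  induction hg using Subgroup.closure_induction generalizing y with
  | mem g hg =>
    obtain ⟨x, rfl⟩ := hg
    exact (toEnvelGroup R).map_act'
  | one => simp
  | mul a b _ _ iha ihb =>
    rw [map_mul, Equiv.Perm.mul_apply, iha, ihb]
    group
  | inv a _ iha =>
    have := iha (envelAction a⁻¹ y)
    rw [map_inv, Equiv.Perm.coe_inv, Equiv.apply_symm_apply] at this
    rw [map_inv, Equiv.Perm.coe_inv, this]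
    group

theorem mem_center_of_envelAction_eq_one {g : EnvelGroup R} (hg : envelAction g = 1) :
    g ∈ Subgroup.center (EnvelGroup R) := by
  rw [Subgroup.center_eq_iInf closure_range_toEnvelGroup]
  simp only [Subgroup.mem_iInf, Set.forall_mem_range, Subgroup.mem_centralizer_singleton_iff]
  intro y
  have := toEnvelGroup_envelAction g y
  rw [hg, Equiv.Perm.one_apply, eq_mul_inv_iff_mul_eq] at this
  exact this.symm

theorem envelAction_list_prod (l : List R) :
    envelAction (l.map (fun x => (toEnvelGroup R x : EnvelGroup R))).prod
      = (l.map (fun x => (act' x : Equiv.Perm R))).prod := by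
  rw [map_list_prod, List.map_map]
  rfl

end Rack

theorem trivial_center_induced_rack_rep_strong_general (X : Type*) [Rack X]
    (x₀ : X)
    (hcenter : Subgroup.center (Rack.EnvelGroup X ⧸ Subgroup.normalClosure
        {(Rack.toEnvelGroup X x₀ : Rack.EnvelGroup X)
          ^ orderOf (Rack.act' x₀ : Equiv.Perm X)}) = ⊥)
    (V : Type*) [AddCommGroup V] [Module ℂ V]
    (ρbar : (Rack.EnvelGroup X ⧸ Subgroup.normalClosure
        {(Rack.toEnvelGroup X x₀ : Rack.EnvelGroup X)
          ^ orderOf (Rack.act' x₀ : Equiv.Perm X)}) →* (V ≃ₗ[ℂ] V))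
    (l : List X)
    (hstab : (l.map (fun x => (Rack.act' x : Equiv.Perm X))).prod = 1) :
    (l.map (fun x =>
      ρbar (QuotientGroup.mk (Rack.toEnvelGroup X x : Rack.EnvelGroup X)))).prod = 1 := by
  set π := QuotientGroup.mk' (Subgroup.normalClosure
    {(Rack.toEnvelGroup X x₀ : Rack.EnvelGroup X) ^ orderOf (Rack.act' x₀ : Equiv.Perm X)})
  set P := (l.map (fun x => (Rack.toEnvelGroup X x : Rack.EnvelGroup X))).prod
  have hP : P ∈ Subgroup.center (Rack.EnvelGroup X) :=
    Rack.mem_center_of_envelAction_eq_one ((Rack.envelAction_list_prod l).trans hstab)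
  have hπP : π P = 1 := by
    simpa only [hcenter, Subgroup.mem_bot] using
      π.map_mem_center_of_surjective (QuotientGroup.mk'_surjective _) hP
  calc (l.map (fun x => ρbar (QuotientGroup.mk (Rack.toEnvelGroup X x : Rack.EnvelGroup X)))).prod
      = (ρbar.comp π) P := by rw [map_list_prod, List.map_map]; rfl
    _ = 1 := by rw [MonoidHom.comp_apply, hπP, map_one]

/-- Let `X` be a finite connected rack with finite enveloping group
`G̅_X = As(X)/N` (`N` the normal closure of `{g_{x₀}^n}`, `n` the common order of the
`L_x`), and suppose the center of `G̅_X` is trivial. Then for any group homomorphism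
`ρ̄ : G̅_X →* GL(V)`, the induced rack representation `ρ_x := ρ̄(g_x · N)` is strong: for
every stabilizing family `(u₁, …, u_k)` of `X` (encoded as a list `l = [u_k, …, u_1]`
with `L_{u_k} ∘ ⋯ ∘ L_{u_1} = id`), one has `ρ_{u_k} ∘ ⋯ ∘ ρ_{u_1} = id` on `V`. -/
theorem trivial_center_induced_rack_rep_strong (X : Type*) [Rack X] [Fintype X]
    (hconn : ∀ x y : X, ∃ φ ∈ Subgroup.closure
      (Set.range (fun x : X => (Rack.act' x : Equiv.Perm X))), φ x = y)
    (x₀ : X)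
    (hcenter : Subgroup.center (Rack.EnvelGroup X ⧸ Subgroup.normalClosure
        {(Rack.toEnvelGroup X x₀ : Rack.EnvelGroup X)
          ^ orderOf (Rack.act' x₀ : Equiv.Perm X)}) = ⊥)
    (V : Type*) [AddCommGroup V] [Module ℂ V]
    (ρbar : (Rack.EnvelGroup X ⧸ Subgroup.normalClosure
        {(Rack.toEnvelGroup X x₀ : Rack.EnvelGroup X)
          ^ orderOf (Rack.act' x₀ : Equiv.Perm X)}) →* (V ≃ₗ[ℂ] V))
    (l : List X)
    (hstab : (l.map (fun x => (Rack.act' x : Equiv.Perm X))).prod = 1) :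
    (l.map (fun x =>
      ρbar (QuotientGroup.mk (Rack.toEnvelGroup X x : Rack.EnvelGroup X)))).prod = 1 :=
  trivial_center_induced_rack_rep_strong_general X x₀ hcenter V ρbar l hstab
end
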